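/- For a composition J of n of length s > 1 with some descent p, the sum ∑_{I ⊨ n} ∏_{d ∈ Des(I)} (-t_d) · ∏_{k ∈ 𝒜(I,J)} t_{j_k} vanishes; for J = (n), this sum equals (1-t_1)(1-t_2)···(1-t_{n-1})·(1-t_n)/(1-t_n), i.e. ∏_{d=1}^{n-1}(1+(-t_d)) summed over all descent subsets gives ∏_{d=1}^{n-1}(1-t_d). -/

import Mathlib

open scoped BigOperators

/-- The descent set of a composition `I` of `n`: the partial sums
`i_1 + ⋯ + i_k` for `1 ≤ k ≤ ℓ(I) - 1`. -/
def desSet {n : ℕ} (I : Composition n) : Finset ℕ :=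
  ((List.range (I.length - 1)).map (fun k => (I.blocks.take (k+1)).sum)).toFinset

/-- `𝒜(I,J) = {k < ℓ(J) : j_1 + ⋯ + j_k ∉ Des(I)}`. -/
def AAcomp {n : ℕ} (I J : Composition n) : Finset ℕ :=
  (Finset.Icc 1 (J.length - 1)).filter (fun k => (J.blocks.take k).sum ∉ desSet I)

/-- The `k`-th part (1-indexed) of a composition. -/
def part {n : ℕ} (J : Composition n) (k : ℕ) : ℕ := J.blocks.getD (k-1) 0

/-- `Sym`, the algebra of noncommutative symmetric functions, realized as the
free associative algebra on the complete functions `S_1, S_2, …`;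
`Sgen n` is the generator `S_n`. -/
noncomputable def Sgen (R : Type*) [CommRing R] (n : ℕ) : FreeAlgebra R ℕ :=
  FreeAlgebra.ι R n

/-- `S^J = S_{j_1} ⋯ S_{j_r}` for a list of parts `J`. -/
noncomputable def SJ (R : Type*) [CommRing R] (J : List ℕ) : FreeAlgebra R ℕ :=
  (J.map (Sgen R)).prod

/-- The multiparameter analogue `ℛ_I(t; A)` of the `(1-t)`-transformed ribbon:
`ℛ_I = (-1)^{ℓ(I)} ∑_{J ⊨ n} (-1)^{ℓ(J)} (1 - t_{j_r}) (∏_{k ∈ 𝒜(I,J)} t_{j_k}) S^J`. -/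
noncomputable def Rr {R : Type*} [CommRing R] (t : ℕ → R) {n : ℕ} (I : Composition n) :
    FreeAlgebra R ℕ :=
  ∑ J : Composition n,
    ((-1 : R) ^ I.length * (-1 : R) ^ J.length
        * (1 - t (part J J.length)) * ∏ k ∈ AAcomp I J, t (part J k)) • SJ R J.blocks

/-- `𝒮^I(t) = ∑_{J ≤ I} ℛ_J(t)`, the sum over compositions `J` coarser than `I`. -/
noncomputable def Ss {R : Type*} [CommRing R] (t : ℕ → R) {n : ℕ} (I : Composition n) :
    FreeAlgebra R ℕ :=
  ∑ J ∈ Finset.univ.filter (fun J : Composition n => desSet J ⊆ desSet I), Rr t J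

/-- Concatenation `IJ` of compositions. -/
def concatComp {m n : ℕ} (I : Composition m) (J : Composition n) : Composition (m+n) :=
  ⟨I.blocks ++ J.blocks,
   fun hi => by
      rcases List.mem_append.mp hi with h | h
      · exact I.blocks_pos h
      · exact J.blocks_pos h,
   by rw [List.sum_append, I.blocks_sum, J.blocks_sum]⟩

/-- Near-concatenation `I ▷ J = (i_1, …, i_{r-1}, i_r + j_1, j_2, …, j_s)`. -/
def nearConcat {m n : ℕ} (hm : 0 < m) (hn : 0 < n)
    (I : Composition m) (J : Composition n) : Composition (m+n) := by
  have hI : I.blocks ≠ [] := by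
    intro h
    rw [← I.blocks_sum, h] at hm
    exact absurd hm (by simp)
  have hJ : J.blocks ≠ [] := by
    intro h
    rw [← J.blocks_sum, h] at hn
    exact absurd hn (by simp)
  refine ⟨I.blocks.dropLast ++ (I.blocks.getLast hI + J.blocks.head hJ) :: J.blocks.tail,
    ?_, ?_⟩
  · intro i hi
    rcases List.mem_append.mp hi with h | h
    · exact I.blocks_pos (List.dropLast_subset _ h)
    · rcases List.mem_cons.mp h with h | h
      · subst h
        exact Nat.add_pos_left (I.blocks_pos (List.getLast_mem hI)) _
      · exact J.blocks_pos (List.mem_of_mem_tail h)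
  · have h1 := congrArg List.sum (List.dropLast_append_getLast hI)
    have h2 := congrArg List.sum (List.cons_head_tail hJ)
    rw [I.blocks_sum] at h1
    rw [J.blocks_sum] at h2
    simp only [List.sum_append, List.sum_cons, List.sum_nil, add_zero] at h1 h2
    rw [List.sum_append, List.sum_cons]
    omega

/-!
Sending a composition to its descent set is a bijection onto the subsets of `{1, …, n - 1}`,
so both sums run over that powerset, and for `J = (n)` the sum is the expansion of
`∏ (1 - t_d)`. For `ℓ(J) > 1` the first partial sum `p = j_1` lies in `{1, …, n - 1}`, and the
terms for `D` and `D ∪ {p}` (with `p ∉ D`) cancel: adding `p` multiplies the descent factor by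
`-t_p`, while it removes exactly `k = 1`, whose factor is `t_{j_1} = t_p`, from `𝒜`.
-/

open Finset

namespace Finset

theorem sum_powerset_eq_zero_of_add_insert {α M : Type*} [DecidableEq α] [AddCommMonoid M]
    {S : Finset α} {p : α} (hp : p ∈ S) (F : Finset α → M)
    (hF : ∀ D ⊆ S.erase p, F D + F (insert p D) = 0) : ∑ D ∈ S.powerset, F D = 0 := by
  rw [← insert_erase hp, sum_powerset_insert (notMem_erase p S), ← sum_add_distrib]
  exact sum_eq_zero fun D hD => hF D (mem_powerset.1 hD)

end Finset

namespace Composition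

variable {n : ℕ} (c : Composition n)

theorem sizeUpTo_inj {a b : ℕ} (ha : a ≤ c.length) (hb : b ≤ c.length) :
    c.sizeUpTo a = c.sizeUpTo b ↔ a = b := by
  simpa [boundary, Fin.ext_iff] using c.boundary.injective.eq_iff
    (a := ⟨a, Nat.lt_succ_of_le ha⟩) (b := ⟨b, Nat.lt_succ_of_le hb⟩)

theorem sizeUpTo_pos_and_lt_iff {k : ℕ} (hk : k ≤ c.length) :
    0 < c.sizeUpTo k ∧ c.sizeUpTo k < n ↔ 0 < k ∧ k < c.length := by
  have h0 := c.sizeUpTo_inj hk (Nat.zero_le _)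
  have hlast := c.sizeUpTo_inj hk le_rfl
  rw [sizeUpTo_zero] at h0
  rw [sizeUpTo_length] at hlast
  have := c.sizeUpTo_le k
  omega

theorem mem_boundaries_iff {j : Fin (n + 1)} :
    j ∈ c.boundaries ↔ ∃ k ≤ c.length, c.sizeUpTo k = j := by
  simp [boundaries, boundary, Fin.ext_iff, Fin.exists_iff]

end Composition

section

variable {n : ℕ}

theorem mem_desSet {c : Composition n} {m : ℕ} :
    m ∈ desSet c ↔ ∃ k, 0 < k ∧ k < c.length ∧ c.sizeUpTo k = m := by
  simp only [desSet, List.mem_toFinset, List.mem_map, List.mem_range]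
  constructor
  · rintro ⟨k, hk, rfl⟩
    exact ⟨k + 1, k.succ_pos, by omega, rfl⟩
  · rintro ⟨k, hk0, hk, rfl⟩
    exact ⟨k - 1, by omega, by rw [Nat.sub_add_cancel hk0]; rfl⟩

theorem desSet_eq_image (c : Composition n) :
    desSet c = (compositionAsSetEquiv n (compositionEquiv n c)).image
      (fun i : Fin (n - 1) => (i : ℕ) + 1) := by
  ext m
  simp only [mem_desSet, mem_image, compositionEquiv, compositionAsSetEquiv, Equiv.coe_fn_mk,
    Composition.toCompositionAsSet, Set.mem_toFinset, Set.mem_ofPred_eq,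
    Composition.mem_boundaries_iff, add_comm 1]
  constructor
  · rintro ⟨k, hk0, hk, rfl⟩
    have := (c.sizeUpTo_pos_and_lt_iff hk.le).2 ⟨hk0, hk⟩
    exact ⟨⟨c.sizeUpTo k - 1, by omega⟩, ⟨k, hk.le, by simp; omega⟩, by simp; omega⟩
  · rintro ⟨i, ⟨k, hk, hki⟩, rfl⟩
    have := (c.sizeUpTo_pos_and_lt_iff hk).1 (by omega)
    exact ⟨k, this.1, this.2, hki⟩

theorem sum_desSet_eq_sum_powerset {M : Type*} [AddCommMonoid M] (F : Finset ℕ → M) :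
    ∑ c : Composition n, F (desSet c) = ∑ D ∈ (Icc 1 (n - 1)).powerset, F D := by
  have hinj : Function.Injective (fun i : Fin (n - 1) => (i : ℕ) + 1) :=
    (add_left_injective 1).comp Fin.val_injective
  have hIcc : univ.image (fun i : Fin (n - 1) => (i : ℕ) + 1) = Icc 1 (n - 1) := by
    ext m
    simp only [mem_image, mem_univ, true_and, mem_Icc]
    exact ⟨fun ⟨i, hi⟩ => by omega, fun hm => ⟨⟨m - 1, by omega⟩, by simp; omega⟩⟩
  rw [← hIcc, powerset_image, sum_image (image_injOn_powerset_of_injOn hinj.injOn), powerset_univ]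
  exact Fintype.sum_equiv ((compositionEquiv n).trans (compositionAsSetEquiv n)) _ _
    (fun c => by rw [desSet_eq_image]; rfl)

def AAset (D : Finset ℕ) (J : Composition n) : Finset ℕ :=
  (Icc 1 (J.length - 1)).filter (fun k => J.sizeUpTo k ∉ D)

theorem AAcomp_eq_AAset (I J : Composition n) : AAcomp I J = AAset (desSet I) J := rfl

theorem part_one (J : Composition n) : part J 1 = J.sizeUpTo 1 := by
  rcases h : J.blocks with _ | ⟨a, l⟩ <;> simp [part, Composition.sizeUpTo, h]

theorem AAset_eq_insert_one {J : Composition n} (hJ : 1 < J.length) {D : Finset ℕ}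
    (hD : J.sizeUpTo 1 ∉ D) : AAset D J = insert 1 (AAset (insert (J.sizeUpTo 1) D) J) := by
  ext k
  simp only [AAset, mem_insert, mem_filter, mem_Icc, not_or]
  constructor
  · rintro ⟨hk, hkD⟩
    rcases eq_or_ne k 1 with rfl | hk1
    · exact .inl rfl
    · exact .inr ⟨hk, mt (J.sizeUpTo_inj (by omega) hJ.le).1 hk1, hkD⟩
  · rintro (rfl | ⟨hk, -, hkD⟩)
    · exact ⟨⟨le_rfl, by omega⟩, hD⟩
    · exact ⟨hk, hkD⟩

theorem one_notMem_AAset_insert (J : Composition n) (D : Finset ℕ) :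
    1 ∉ AAset (insert (J.sizeUpTo 1) D) J := by
  simp [AAset]

end

theorem stmt_5_general {R : Type*} [CommRing R] (t : ℕ → R) {n : ℕ} :
    (∀ J : Composition n, 1 < J.length →
      ∑ I : Composition n,
        (∏ d ∈ desSet I, (- t d)) * ∏ k ∈ AAcomp I J, t (part J k) = 0) ∧
    ∑ I : Composition n, (∏ d ∈ desSet I, (- t d)) =
      ∏ d ∈ Finset.Icc 1 (n-1), (1 - t d) := by
  constructor
  · intro J hJ
    have hp : J.sizeUpTo 1 ∈ Icc 1 (n - 1) := by
      have := (J.sizeUpTo_pos_and_lt_iff hJ.le).2 ⟨one_pos, hJ⟩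
      simp only [mem_Icc]; omega
    simp only [AAcomp_eq_AAset]
    rw [sum_desSet_eq_sum_powerset fun D => (∏ d ∈ D, -t d) * ∏ k ∈ AAset D J, t (part J k)]
    refine sum_powerset_eq_zero_of_add_insert hp _ fun D hD => ?_
    have hpD : J.sizeUpTo 1 ∉ D := fun h => notMem_erase _ _ (hD h)
    rw [prod_insert hpD, AAset_eq_insert_one hJ hpD, prod_insert (one_notMem_AAset_insert J D),
      part_one]
    ring
  · rw [sum_desSet_eq_sum_powerset fun D => ∏ d ∈ D, -t d, ← prod_one_add]
    simp only [sub_eq_add_neg]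

/-- the key computation for the inverse of `θ_t`.
For a composition `J` of `n` of length `> 1` (so having some descent), the sum
`∑_{I ⊨ n} (∏_{d ∈ Des(I)} (-t_d)) ∏_{k ∈ 𝒜(I,J)} t_{j_k}` vanishes;
for `J = (n)` (where `𝒜(I,(n)) = ∅`) it equals `∏_{d=1}^{n-1} (1 - t_d)`. -/
theorem stmt_5 {R : Type*} [CommRing R] (t : ℕ → R) {n : ℕ} (hn : 0 < n) :
    (∀ J : Composition n, 1 < J.length →
      ∑ I : Composition n,
        (∏ d ∈ desSet I, (- t d)) * ∏ k ∈ AAcomp I J, t (part J k) = 0) ∧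
    ∑ I : Composition n, (∏ d ∈ desSet I, (- t d)) =
      ∏ d ∈ Finset.Icc 1 (n-1), (1 - t d) :=
  stmt_5_general t
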